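/- Let k be an integer with k ≥ 1 and m ∈ ℤ. Define ₁F₁(a; b; z) = Σ_{n=0}^∞ ((a)_n / (b)_n) zⁿ/n!, Ψ_{m,k}(θ,y) = e^{−i m θ/2} e^{−y²/2} y^k · ₁F₁( (1 + 2k − m)/4 ; k + 1/2 ; y² ), and for smooth F : ℝ² → ℂ define (E⁺ F)(θ,y) = e^{−iθ} ( y F(θ,y) − ∂_y F(θ,y) ). Then for all (θ,y) ∈ ℝ²: (E⁺ Ψ_{m,k})(θ,y) = ( (1 + 2k + m)(k−1) / ((2k−1)(2k+1)) ) · Ψ_{m+2,k+1}(θ,y) − k · Ψ_{m+2,k−1}(θ,y). -/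

import Mathlib

open Complex

/-- The confluent hypergeometric function
`₁F₁(a;b;z) = Σ_{n≥0} ((a)_n/(b)_n) zⁿ/n!` (Pochhammer rising factorials). -/
noncomputable def oneFone (a b z : ℂ) : ℂ :=
  ∑' n : ℕ, ((ascPochhammer ℂ n).eval a / (ascPochhammer ℂ n).eval b) * z ^ n
    / (n.factorial : ℂ)

/-- The weight-`m` `K`-finite vector
`Ψ_{m,k}(θ,y) = e^{-imθ/2} e^{-y²/2} y^k ₁F₁((1+2k-m)/4; k+1/2; y²)`. -/
noncomputable def Psi (m : ℤ) (k : ℕ) (θ y : ℝ) : ℂ :=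
  Complex.exp (-I * (m : ℂ) * (θ : ℂ) / 2) * Complex.exp (-(y : ℂ) ^ 2 / 2)
    * (y : ℂ) ^ k
    * oneFone ((1 + 2 * (k : ℂ) - (m : ℂ)) / 4) ((k : ℂ) + 1/2) ((y : ℂ) ^ 2)

/-- Partial derivative in the second variable `y`. -/
noncomputable def pderivY (F : ℝ → ℝ → ℂ) (θ y : ℝ) : ℂ := deriv (fun y' => F θ y') y

/-- The Heisenberg operator `(E⁺F)(θ,y) = e^{-iθ}(yF - ∂_yF)`. -/
noncomputable def Eplus (F : ℝ → ℝ → ℂ) (θ y : ℝ) : ℂ :=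
  Complex.exp (-I * (θ : ℂ)) * ((y : ℂ) * F θ y - pderivY F θ y)

/-!
Write `Ψ_{m,k} = e^{-imθ/2} e^{-y²/2} y^k M(a, b, y²)` with `M = ₁F₁`, `a = (1 + 2k - m)/4` and
`b = k + 1/2`. On the radial factor, `E⁺` acts through `M ↦ 2zM - (b - 1/2)M - 2zM'` at `z = y²`,
and this combination is a linear combination of two contiguous relations of `₁F₁`,
`b z M' = z (b M - (b - a) M(a, b + 1))` and `(b - 1) M(a - 1, b - 1) = z M' + (b - 1 - z) M`,
each checked coefficientwise on the power series. The shifted parameters `(a, b + 1)` and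
`(a - 1, b - 1)` are exactly those of `Ψ_{m+2,k+1}` and `Ψ_{m+2,k-1}`.
-/

theorem HasSum.eq_mul_of_succ_eq_mul {R : Type*} [Ring R] [TopologicalSpace R]
    [IsTopologicalRing R] [T2Space R] {f g : ℕ → R} {s t z : R} (hf : HasSum f s)
    (hg : HasSum g t) (h0 : f 0 = 0) (hsucc : ∀ n, f (n + 1) = z * g n) : s = z * t := by
  have hshift : HasSum (fun n => f (n + 1)) s := by
    simpa [h0] using (hasSum_nat_add_iff' 1).mpr hf
  exact hshift.unique (by simpa only [hsucc] using hg.mul_left z)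

section EntireSeries

variable {c : ℕ → ℂ}

theorem norm_mul_pow_le_of_mem_ball (c : ℂ) (n : ℕ) {r : ℝ} {w : ℂ}
    (hw : w ∈ Metric.ball (0 : ℂ) r) : ‖c * w ^ n‖ ≤ ‖c‖ * r ^ n := by
  rw [mem_ball_zero_iff] at hw
  rw [norm_mul, norm_pow]
  gcongr

theorem differentiable_tsum_mul_pow (hc : ∀ r : ℝ, Summable fun n => ‖c n‖ * r ^ n) :
    Differentiable ℂ fun w => ∑' n, c n * w ^ n := fun z =>
  (differentiableOn_tsum_of_summable_norm (hc (‖z‖ + 1))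
    (fun n => ((differentiable_pow n).const_mul _).differentiableOn) Metric.isOpen_ball
    (fun n _ => norm_mul_pow_le_of_mem_ball (c n) n)).differentiableAt
    (Metric.isOpen_ball.mem_nhds (by simp))

theorem hasSum_mul_deriv_tsum_mul_pow (hc : ∀ r : ℝ, Summable fun n => ‖c n‖ * r ^ n) (z : ℂ) :
    HasSum (fun n => n * c n * z ^ n) (z * deriv (fun w => ∑' n, c n * w ^ n) z) := by
  have hderiv := hasSum_deriv_of_summable_norm (hc (‖z‖ + 1))
    (fun n => ((differentiable_pow n).const_mul (c n)).differentiableOn) Metric.isOpen_ball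
    (fun n _ => norm_mul_pow_le_of_mem_ball (c n) n) (by simp : z ∈ Metric.ball 0 (‖z‖ + 1))
  refine (hderiv.mul_left z).congr_fun fun n => ?_
  rcases n with _ | n
  · simp
  · simp only [deriv_const_mul_field, deriv_pow_field, Nat.add_sub_cancel]
    push_cast
    ring

end EntireSeries

section Hypergeometric

open scoped Nat

noncomputable def oneFoneCoeff (a b : ℂ) (n : ℕ) : ℂ :=
  (ascPochhammer ℂ n).eval a / (ascPochhammer ℂ n).eval b / n !

theorem oneFone_eq_tsum (a b : ℂ) : oneFone a b = fun z => ∑' n, oneFoneCoeff a b n * z ^ n := by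
  funext z
  exact tsum_congr fun n => by rw [oneFoneCoeff]; ring

theorem oneFoneCoeff_zero (a b : ℂ) : oneFoneCoeff a b 0 = 1 := by
  simp [oneFoneCoeff]

theorem oneFoneCoeff_succ (a b : ℂ) (n : ℕ) :
    oneFoneCoeff a b (n + 1) = oneFoneCoeff a b n * (a + n) / ((b + n) * (n + 1)) := by
  simp only [oneFoneCoeff, ascPochhammer_succ_eval, Nat.factorial_succ]
  push_cast
  simp only [div_eq_mul_inv, mul_inv]
  ring

theorem oneFoneCoeff_sub_one_succ (a b : ℂ) (n : ℕ) :
    oneFoneCoeff (a - 1) (b - 1) (n + 1) = oneFoneCoeff a b n * (a - 1) / ((b - 1) * (n + 1)) := by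
  simp only [oneFoneCoeff, ascPochhammer_succ_left, Polynomial.eval_mul, Polynomial.eval_comp,
    Polynomial.eval_X, Polynomial.eval_add, Polynomial.eval_one, sub_add_cancel, Nat.factorial_succ]
  push_cast
  simp only [div_eq_mul_inv, mul_inv]
  ring

theorem oneFoneCoeff_add_one_right (a : ℂ) {b : ℂ} (hb : b ≠ 0) (n : ℕ) :
    oneFoneCoeff a (b + 1) n = oneFoneCoeff a b n * b / (b + n) := by
  have hpoch : (ascPochhammer ℂ n).eval b * (b + n) = (ascPochhammer ℂ n).eval (b + 1) * b := by
    rw [← ascPochhammer_succ_eval, ascPochhammer_succ_left, mul_comm]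
    simp
  calc oneFoneCoeff a (b + 1) n
      = (ascPochhammer ℂ n).eval a * b / ((ascPochhammer ℂ n).eval (b + 1) * b) / n ! := by
        rw [oneFoneCoeff, mul_div_mul_right _ _ hb]
    _ = oneFoneCoeff a b n * b / (b + n) := by
        rw [← hpoch, oneFoneCoeff]
        simp only [div_eq_mul_inv, mul_inv]
        ring

theorem norm_ascPochhammer_eval_le (a : ℂ) {b : ℂ} (hb : 0 < b.re) (n : ℕ) :
    ‖(ascPochhammer ℂ n).eval a‖ ≤ (1 + ‖a‖ / b.re) ^ n * ‖(ascPochhammer ℂ n).eval b‖ := by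
  induction n with
  | zero => simp
  | succ n ih =>
    have hstep : ‖a + n‖ ≤ (1 + ‖a‖ / b.re) * ‖b + n‖ := calc
      ‖a + n‖ ≤ ‖a‖ + n := by simpa using norm_add_le a (n : ℂ)
      _ ≤ (1 + ‖a‖ / b.re) * (b.re + n) := by
        have hcancel : ‖a‖ / b.re * b.re = ‖a‖ := div_mul_cancel₀ _ hb.ne'
        have hnonneg : 0 ≤ ‖a‖ / b.re * n := by positivity
        nlinarith
      _ ≤ (1 + ‖a‖ / b.re) * ‖b + n‖ := by
        gcongr
        simpa using Complex.re_le_norm (b + n)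
    rw [ascPochhammer_succ_eval, ascPochhammer_succ_eval, norm_mul, norm_mul, pow_succ]
    calc _ ≤ (1 + ‖a‖ / b.re) ^ n * ‖(ascPochhammer ℂ n).eval b‖ * ((1 + ‖a‖ / b.re) * ‖b + n‖) :=
          mul_le_mul ih hstep (norm_nonneg _) (by positivity)
      _ = _ := by ring

theorem summable_norm_oneFoneCoeff_mul_pow (a : ℂ) {b : ℂ} (hb : 0 < b.re) (r : ℝ) :
    Summable fun n => ‖oneFoneCoeff a b n‖ * r ^ n := by
  refine Summable.of_norm_bounded (Real.summable_pow_div_factorial ((1 + ‖a‖ / b.re) * |r|))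
    fun n => ?_
  have hratio : ‖(ascPochhammer ℂ n).eval a‖ / ‖(ascPochhammer ℂ n).eval b‖
      ≤ (1 + ‖a‖ / b.re) ^ n :=
    div_le_of_le_mul₀ (norm_nonneg _) (by positivity) (norm_ascPochhammer_eval_le a hb n)
  rw [norm_mul, norm_norm, norm_pow, Real.norm_eq_abs, oneFoneCoeff, norm_div, norm_div,
    Complex.norm_natCast, mul_pow, div_mul_eq_mul_div]
  gcongr

variable (a : ℂ) {b : ℂ}

theorem hasSum_oneFone (hb : 0 < b.re) (z : ℂ) :
    HasSum (fun n => oneFoneCoeff a b n * z ^ n) (oneFone a b z) := by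
  rw [oneFone_eq_tsum]
  refine (Summable.of_norm ?_).hasSum
  simpa only [norm_mul, norm_pow] using summable_norm_oneFoneCoeff_mul_pow a hb ‖z‖

theorem differentiable_oneFone (hb : 0 < b.re) : Differentiable ℂ (oneFone a b) := by
  rw [oneFone_eq_tsum]
  exact differentiable_tsum_mul_pow (summable_norm_oneFoneCoeff_mul_pow a hb)

theorem hasSum_mul_deriv_oneFone (hb : 0 < b.re) (z : ℂ) :
    HasSum (fun n => n * oneFoneCoeff a b n * z ^ n) (z * deriv (oneFone a b) z) := by
  rw [oneFone_eq_tsum]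
  exact hasSum_mul_deriv_tsum_mul_pow (summable_norm_oneFoneCoeff_mul_pow a hb) z

theorem oneFone_contiguous_add_one_right (hb : 0 < b.re) (z : ℂ) :
    b * (z * deriv (oneFone a b) z) = z * (b * oneFone a b z - (b - a) * oneFone a (b + 1) z) := by
  have hb1 : 0 < (b + 1).re := by simp only [add_re, one_re]; linarith
  refine ((hasSum_mul_deriv_oneFone a hb z).mul_left b).eq_mul_of_succ_eq_mul
    (((hasSum_oneFone a hb z).mul_left b).sub ((hasSum_oneFone a hb1 z).mul_left (b - a)))
    (by simp) fun n => ?_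
  have hbn : b + n ≠ 0 := Complex.ne_zero_of_re_pos (by simp only [add_re, natCast_re]; positivity)
  rw [oneFoneCoeff_succ, oneFoneCoeff_add_one_right a (Complex.ne_zero_of_re_pos hb)]
  field_simp
  push_cast
  ring

theorem oneFone_contiguous_sub_one (hb : 1 < b.re) (z : ℂ) :
    (b - 1) * oneFone (a - 1) (b - 1) z
      = z * deriv (oneFone a b) z + (b - 1 - z) * oneFone a b z := by
  have hb0 : 0 < b.re := by linarith
  have hb1 : 0 < (b - 1).re := by simp only [sub_re, one_re]; linarith
  suffices key : (b - 1) * oneFone (a - 1) (b - 1) z - z * deriv (oneFone a b) z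
      - (b - 1) * oneFone a b z = z * -oneFone a b z by linear_combination key
  refine ((((hasSum_oneFone (a - 1) hb1 z).mul_left (b - 1)).sub
    (hasSum_mul_deriv_oneFone a hb0 z)).sub
    ((hasSum_oneFone a hb0 z).mul_left (b - 1))).eq_mul_of_succ_eq_mul
    (hasSum_oneFone a hb0 z).neg (by simp [oneFoneCoeff_zero]) fun n => ?_
  have hbn : b + n ≠ 0 := Complex.ne_zero_of_re_pos (by simp only [add_re, natCast_re]; positivity)
  have hb1 : b - 1 ≠ 0 := Complex.ne_zero_of_re_pos hb1
  rw [oneFoneCoeff_sub_one_succ, oneFoneCoeff_succ]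
  field_simp
  push_cast
  ring

theorem oneFone_raising_relation (hb : 1 < b.re) (z : ℂ) :
    2 * z * oneFone a b z - (b - 1 / 2) * oneFone a b z - 2 * (z * deriv (oneFone a b) z)
      = (b - a) * (2 * b - 3) / (2 * b * (b - 1)) * z * oneFone a (b + 1) z
        - (b - 1 / 2) * oneFone (a - 1) (b - 1) z := by
  have hb0 : b ≠ 0 := Complex.ne_zero_of_re_pos (by linarith)
  have hb1 : b - 1 ≠ 0 := Complex.ne_zero_of_re_pos (by simp only [sub_re, one_re]; linarith)
  have hsub := oneFone_contiguous_sub_one a hb z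
  have hadd := oneFone_contiguous_add_one_right a (by linarith : 0 < b.re) z
  field_simp
  linear_combination (b * (2 * b - 1)) * hsub - (2 * b - 3) * hadd

end Hypergeometric

section Psi

variable {m : ℤ} {k : ℕ} {a b : ℂ}

theorem Psi_eq_of_params (ha : (1 + 2 * (k : ℂ) - m) / 4 = a) (hb : (k : ℂ) + 1 / 2 = b)
    (θ y : ℝ) :
    Psi m k θ y = Complex.exp (-I * m * θ / 2) * Complex.exp (-(y : ℂ) ^ 2 / 2) * (y : ℂ) ^ k
      * oneFone a b ((y : ℂ) ^ 2) := by
  subst ha hb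
  rfl

theorem hasDerivAt_Psi (ha : (1 + 2 * (k : ℂ) - m) / 4 = a) (hb : (k : ℂ) + 1 / 2 = b)
    (θ y : ℝ) :
    HasDerivAt (Psi m k θ) (Complex.exp (-I * m * θ / 2) * Complex.exp (-(y : ℂ) ^ 2 / 2)
      * ((k * (y : ℂ) ^ (k - 1) - (y : ℂ) ^ (k + 1)) * oneFone a b ((y : ℂ) ^ 2)
        + 2 * (y : ℂ) ^ (k + 1) * deriv (oneFone a b) ((y : ℂ) ^ 2))) y := by
  have hbre : 0 < b.re := by
    rw [← hb]; norm_num; positivity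
  have hG : HasDerivAt (fun t : ℝ => Complex.exp (-(t : ℂ) ^ 2 / 2))
      (Complex.exp (-(y : ℂ) ^ 2 / 2) * -y) y :=
    ((hasDerivAt_pow 2 (y : ℂ)).neg.div_const 2).cexp.comp_ofReal.congr_deriv (by
      simp only [Pi.neg_apply]; ring)
  have hP := (hasDerivAt_pow k (y : ℂ)).comp_ofReal
  have hM : HasDerivAt (fun t : ℝ => oneFone a b ((t : ℂ) ^ 2))
      (deriv (oneFone a b) ((y : ℂ) ^ 2) * (2 * y)) y := by
    simpa using (((differentiable_oneFone a hbre) ((y : ℂ) ^ 2)).hasDerivAt.comp (y : ℂ)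
      (hasDerivAt_pow 2 (y : ℂ))).comp_ofReal
  have hfun : Psi m k θ = fun t : ℝ => Complex.exp (-I * m * θ / 2)
      * (Complex.exp (-(t : ℂ) ^ 2 / 2) * (t : ℂ) ^ k * oneFone a b ((t : ℂ) ^ 2)) :=
    funext fun t => by rw [Psi_eq_of_params ha hb]; ring
  rw [hfun]
  exact (((hG.mul hP).mul hM).const_mul _).congr_deriv (by simp only [Pi.mul_apply]; ring)

theorem Eplus_Psi_succ (ha : (1 + 2 * ((k + 1 : ℕ) : ℂ) - m) / 4 = a)
    (hb : ((k + 1 : ℕ) : ℂ) + 1 / 2 = b) (θ y : ℝ) :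
    Eplus (Psi m (k + 1)) θ y = Complex.exp (-I * θ) * Complex.exp (-I * m * θ / 2)
      * Complex.exp (-(y : ℂ) ^ 2 / 2) * (y : ℂ) ^ k
      * (2 * (y : ℂ) ^ 2 * oneFone a b ((y : ℂ) ^ 2) - (b - 1 / 2) * oneFone a b ((y : ℂ) ^ 2)
        - 2 * ((y : ℂ) ^ 2 * deriv (oneFone a b) ((y : ℂ) ^ 2))) := by
  rw [Eplus, pderivY, (hasDerivAt_Psi ha hb θ y).deriv, Psi_eq_of_params ha hb, ← hb,
    Nat.add_sub_cancel]
  push_cast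
  ring

theorem raising_coeff_eq_of_params (hk : 1 ≤ k) (ha : (1 + 2 * (k : ℂ) - m) / 4 = a)
    (hb : (k : ℂ) + 1 / 2 = b) :
    (1 + 2 * (k : ℂ) + m) * ((k : ℂ) - 1) / ((2 * (k : ℂ) - 1) * (2 * (k : ℂ) + 1))
      = (b - a) * (2 * b - 3) / (2 * b * (b - 1)) := by
  have hk' : (k : ℂ) = b - 1 / 2 := by rw [← hb]; ring
  have hb0 : b ≠ 0 := Complex.ne_zero_of_re_pos (by rw [← hb]; norm_num; positivity)
  have hb1 : b - 1 ≠ 0 := Complex.ne_zero_of_re_pos (by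
    rw [← hb]; norm_num; linarith [(Nat.one_le_cast (α := ℝ)).mpr hk])
  rw [show (m : ℂ) = 2 * b - 4 * a by rw [← ha, ← hb]; ring, hk',
    show 2 * (b - 1 / 2) - 1 = 2 * (b - 1) by ring, show 2 * (b - 1 / 2) + 1 = 2 * b by ring]
  field_simp
  ring

end Psi

/-- The Heisenberg action ties adjacent eigenspaces together:
`E⁺Ψ_{m,k} = ((1+2k+m)(k-1)/((2k-1)(2k+1))) Ψ_{m+2,k+1} - k Ψ_{m+2,k-1}`. -/
theorem Eplus_action (k : ℕ) (hk : 1 ≤ k) (m : ℤ) :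
    ∀ θ y : ℝ,
      Eplus (Psi m k) θ y
        = ((1 + 2 * (k : ℂ) + (m : ℂ)) * ((k : ℂ) - 1)
              / ((2 * (k : ℂ) - 1) * (2 * (k : ℂ) + 1))) * Psi (m + 2) (k + 1) θ y
          - (k : ℂ) * Psi (m + 2) (k - 1) θ y := by
  intro θ y
  obtain ⟨j, rfl⟩ : ∃ j, k = j + 1 := ⟨k - 1, by omega⟩
  obtain ⟨a, ha⟩ : ∃ a : ℂ, (1 + 2 * ((j + 1 : ℕ) : ℂ) - m) / 4 = a := ⟨_, rfl⟩
  obtain ⟨b, hb⟩ : ∃ b : ℂ, ((j + 1 : ℕ) : ℂ) + 1 / 2 = b := ⟨_, rfl⟩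
  have hbre : 1 < b.re := by
    rw [← hb]; norm_num; linarith [j.cast_nonneg (α := ℝ)]
  have hk' : ((j + 1 : ℕ) : ℂ) = b - 1 / 2 := by rw [← hb]; ring
  have hphase : Complex.exp (-I * ((m + 2 : ℤ) : ℂ) * θ / 2)
      = Complex.exp (-I * θ) * Complex.exp (-I * m * θ / 2) := by
    rw [← Complex.exp_add]; push_cast; ring_nf
  rw [Eplus_Psi_succ ha hb, oneFone_raising_relation a hbre,
    Psi_eq_of_params (a := a) (b := b + 1) (by rw [← ha]; push_cast; ring)
      (by rw [← hb]; push_cast; ring),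
    Psi_eq_of_params (a := a - 1) (b := b - 1) (by rw [← ha]; push_cast; ring)
      (by rw [← hb]; push_cast; ring),
    hphase, raising_coeff_eq_of_params hk ha hb, hk', Nat.add_sub_cancel]
  ring
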